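/- arXiv:1408.5391 — 2 statements merged into one kernel-verified Lean document; each statement's English description precedes it below -/
import Mathlib

section
/- For every integer n ≥ 1, the number of order ideals of the poset P_n equals 2^{n−1}. -/
open scoped Classical

noncomputable section

/-- `W2 n` is the set `{(a,b) ∈ ℤ≥0² : a + b ≤ n - 2}`. -/
def W2 (n : ℕ) : Finset (ℤ × ℤ) :=
  (Finset.Icc (0:ℤ) (n:ℤ) ×ˢ Finset.Icc (0:ℤ) (n:ℤ)).filter
    (fun p => p.1 + p.2 ≤ (n:ℤ) - 2)

/-- One step: add a vector of `S`, staying inside `W`. -/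
def step2 (S : Set (ℤ × ℤ)) (W : Finset (ℤ × ℤ)) (u v : ℤ × ℤ) : Prop :=
  u ∈ W ∧ v ∈ W ∧ ∃ e ∈ S, v = u + e

/-- The order relation: reflexive-transitive closure of `step2`, restricted to `W`. -/
def le2 (S : Set (ℤ × ℤ)) (W : Finset (ℤ × ℤ)) (u v : ℤ × ℤ) : Prop :=
  u ∈ W ∧ v ∈ W ∧ Relation.ReflTransGen (step2 S W) u v

/-- An order ideal: a downward closed subset of `W`. -/
def IsIdeal2 (S : Set (ℤ × ℤ)) (W : Finset (ℤ × ℤ)) (I : Finset (ℤ × ℤ)) : Prop :=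
  I ⊆ W ∧ ∀ u v : ℤ × ℤ, le2 S W u v → v ∈ I → u ∈ I

/-- The set of all order ideals. -/
def ideals2 (S : Set (ℤ × ℤ)) (W : Finset (ℤ × ℤ)) : Finset (Finset (ℤ × ℤ)) :=
  W.powerset.filter (fun I => IsIdeal2 S W I)

/-- The step vectors of the poset `P_n`: r = (1,0), g = (0,1), b = (-1,1). -/
def Pvec : Set (ℤ × ℤ) := {(1,0), (0,1), (-1,1)}

end

noncomputable section Aux

lemma mem_W2 {n : ℕ} {p : ℤ × ℤ} :
    p ∈ W2 n ↔ 0 ≤ p.1 ∧ 0 ≤ p.2 ∧ p.1 + p.2 ≤ (n:ℤ) - 2 := by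
  simp only [W2, Finset.mem_filter, Finset.mem_product, Finset.mem_Icc]
  omega

lemma reach_right {n : ℕ} : ∀ (k : ℕ) (u : ℤ × ℤ), u ∈ W2 n →
    ((u.1 + k, u.2) : ℤ × ℤ) ∈ W2 n →
    Relation.ReflTransGen (step2 Pvec (W2 n)) u (u.1 + k, u.2) := by
  intro k
  induction k with
  | zero =>
    intro u hu _
    have h : ((u.1 + ((0:ℕ):ℤ), u.2) : ℤ × ℤ) = u := by simp
    rw [h]
  | succ k ih =>
    intro u hu hk
    have hmid : ((u.1 + k, u.2) : ℤ × ℤ) ∈ W2 n := by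
      rw [mem_W2] at hu hk ⊢
      simp only at *
      push_cast at *
      omega
    refine Relation.ReflTransGen.tail (ih u hu hmid) ?_
    refine ⟨hmid, hk, (1, 0), by simp [Pvec], ?_⟩
    have : ((k:ℤ) + 1) = ((k:ℕ)+1 : ℕ) := by push_cast; ring
    ext <;> simp <;> push_cast <;> ring

lemma reach_diag {n : ℕ} : ∀ (m : ℕ) (w : ℤ × ℤ), w ∈ W2 n →
    ((w.1 - m, w.2 + m) : ℤ × ℤ) ∈ W2 n →
    Relation.ReflTransGen (step2 Pvec (W2 n)) w (w.1 - m, w.2 + m) := by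
  intro m
  induction m with
  | zero =>
    intro w hw _
    have h : ((w.1 - ((0:ℕ):ℤ), w.2 + ((0:ℕ):ℤ)) : ℤ × ℤ) = w := by simp
    rw [h]
  | succ m ih =>
    intro w hw hm
    have hmid : ((w.1 - m, w.2 + m) : ℤ × ℤ) ∈ W2 n := by
      rw [mem_W2] at hw hm ⊢
      simp only at *
      push_cast at *
      omega
    refine Relation.ReflTransGen.tail (ih w hw hmid) ?_
    refine ⟨hmid, hm, (-1, 1), by simp [Pvec], ?_⟩
    ext <;> simp <;> push_cast <;> ring

lemma le2_char {n : ℕ} {u v : ℤ × ℤ} :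
    le2 Pvec (W2 n) u v ↔
      u ∈ W2 n ∧ v ∈ W2 n ∧ u.2 ≤ v.2 ∧ u.1 + u.2 ≤ v.1 + v.2 := by
  constructor
  · rintro ⟨hu, hv, hrt⟩
    refine ⟨hu, hv, ?_⟩
    induction hrt with
    | refl => omega
    | tail h1 h2 ih =>
      obtain ⟨hbW, hvW, e, he, rfl⟩ := h2
      obtain ⟨ihl, ihr⟩ := ih hbW
      simp only [Pvec, Set.mem_insert_iff, Set.mem_singleton_iff] at he
      rcases he with rfl | rfl | rfl <;>
        refine ⟨?_, ?_⟩ <;> simp only [Prod.fst_add, Prod.snd_add] <;> (try simp) <;> omega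
  · rintro ⟨hu, hv, h2, h12⟩
    refine ⟨hu, hv, ?_⟩
    set k : ℕ := ((v.1 + v.2) - (u.1 + u.2)).toNat with hk
    set m : ℕ := (v.2 - u.2).toNat with hm
    have hkz : (k : ℤ) = (v.1 + v.2) - (u.1 + u.2) := by omega
    have hmz : (m : ℤ) = v.2 - u.2 := by omega
    have huW := mem_W2.mp hu
    have hvW := mem_W2.mp hv
    have hmid : ((u.1 + k, u.2) : ℤ × ℤ) ∈ W2 n := by
      rw [mem_W2]; simp only; omega
    have h1 := reach_right (n := n) k u hu hmid
    have hveq : ((u.1 + (k:ℤ) - (m:ℤ), u.2 + (m:ℤ)) : ℤ × ℤ) = v := by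
      ext <;> simp <;> omega
    have hfin : (((u.1 + (k:ℤ)) - m, u.2 + m) : ℤ × ℤ) ∈ W2 n := by
      rw [show (((u.1 + (k:ℤ)) - m, u.2 + m) : ℤ × ℤ) = v from hveq]
      exact hv
    have h2' := reach_diag (n := n) m (u.1 + k, u.2) hmid hfin
    simp only at h2'
    rw [hveq] at h2'
    exact h1.trans h2'

/-- number of elements of `S` exceeding `a` -/
def fcount (S : Finset ℤ) (a : ℤ) : ℕ := (S.filter (fun s => a < s)).card

/-- the candidate ideal attached to a set `S ⊆ {1,…,n-1}` -/
def psi (n : ℕ) (S : Finset ℤ) : Finset (ℤ × ℤ) :=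
  (W2 n).filter (fun p => p.2 < (fcount S p.1 : ℤ))

lemma mem_psi {n : ℕ} {S : Finset ℤ} {p : ℤ × ℤ} :
    p ∈ psi n S ↔ p ∈ W2 n ∧ p.2 < (fcount S p.1 : ℤ) := Finset.mem_filter

/-- a downward closed finset of nonnegative integers is an initial segment -/
lemma initseg {T : Finset ℤ} (h0 : ∀ a ∈ T, 0 ≤ a)
    (hd : ∀ a ∈ T, ∀ a', 0 ≤ a' → a' ≤ a → a' ∈ T) (x : ℤ) :
    x ∈ T ↔ 0 ≤ x ∧ x < T.card := by
  constructor
  · intro hx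
    refine ⟨h0 x hx, ?_⟩
    have hsub : Finset.Icc 0 x ⊆ T := by
      intro y hy
      rw [Finset.mem_Icc] at hy
      exact hd x hx y hy.1 hy.2
    have hc := Finset.card_le_card hsub
    rw [Int.card_Icc] at hc
    have := h0 x hx
    omega
  · rintro ⟨hx0, hxc⟩
    have hne : T.Nonempty := Finset.card_pos.mp (by omega)
    have hM := T.max'_mem hne
    have hsub : T ⊆ Finset.Icc 0 (T.max' hne) := by
      intro y hy
      exact Finset.mem_Icc.mpr ⟨h0 y hy, T.le_max' y hy⟩
    have hc := Finset.card_le_card hsub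
    rw [Int.card_Icc] at hc
    have h0M := h0 _ hM
    exact hd _ hM x hx0 (by omega)

lemma fcount_le {n : ℕ} {S : Finset ℤ} (hS : S ⊆ Finset.Icc 1 ((n:ℤ)-1))
    {a : ℤ} (ha : 0 ≤ a) (ha2 : a ≤ (n:ℤ) - 2) :
    (fcount S a : ℤ) ≤ (n:ℤ) - 1 - a := by
  have hsub : S.filter (fun s => a < s) ⊆ Finset.Icc (a+1) ((n:ℤ)-1) := by
    intro s hs
    rw [Finset.mem_filter] at hs
    have := Finset.mem_Icc.mp (hS hs.1)
    rw [Finset.mem_Icc]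
    omega
  have hc := Finset.card_le_card hsub
  rw [Int.card_Icc] at hc
  unfold fcount
  omega

lemma psi_isIdeal {n : ℕ} {S : Finset ℤ} :
    IsIdeal2 Pvec (W2 n) (psi n S) := by
  constructor
  · exact Finset.filter_subset _ _
  · intro u v huv hv
    rw [le2_char] at huv
    obtain ⟨hu, hvW, h2, h12⟩ := huv
    rw [mem_psi] at hv ⊢
    refine ⟨hu, ?_⟩
    have hsub : S.filter (fun s => v.1 < s) ⊆
        S.filter (fun s => u.1 < s) ∪ Finset.Icc (v.1+1) u.1 := by
      intro s hs
      rw [Finset.mem_filter] at hs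
      rw [Finset.mem_union, Finset.mem_filter, Finset.mem_Icc]
      rcases lt_or_ge u.1 s with h | h
      · exact Or.inl ⟨hs.1, h⟩
      · exact Or.inr ⟨by omega, h⟩
    have hc1 := Finset.card_le_card hsub
    have hc2 := Finset.card_union_le (S.filter (fun s => u.1 < s)) (Finset.Icc (v.1+1) u.1)
    have hc3 : (Finset.Icc (v.1+1) u.1).card = (u.1 - v.1).toNat := by
      rw [Int.card_Icc]; congr 1; omega
    have hv2 := hv.2
    unfold fcount at *
    omega

lemma fcount_pred (S : Finset ℤ) (s : ℤ) :
    fcount S (s-1) = fcount S s + (if s ∈ S then 1 else 0) := by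
  unfold fcount
  have hset : S.filter (fun t => s-1 < t) =
      S.filter (fun t => s < t) ∪ S.filter (fun t => t = s) := by
    ext t
    simp only [Finset.mem_filter, Finset.mem_union]
    constructor
    · rintro ⟨ht, h⟩
      rcases lt_or_ge s t with h' | h'
      · exact Or.inl ⟨ht, h'⟩
      · exact Or.inr ⟨ht, by omega⟩
    · rintro (⟨ht, h⟩ | ⟨ht, h⟩) <;> exact ⟨ht, by omega⟩
  rw [hset, Finset.card_union_of_disjoint, Finset.filter_eq']
  · split <;> simp
  · rw [Finset.disjoint_left]
    intro t ht ht'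
    rw [Finset.mem_filter] at ht ht'
    omega

lemma psi_row_card {n : ℕ} {S : Finset ℤ} (hS : S ⊆ Finset.Icc 1 ((n:ℤ)-1))
    {a : ℤ} (ha : 0 ≤ a) (ha2 : a ≤ (n:ℤ) - 2) :
    ((psi n S).filter (fun p => p.1 = a)).card = fcount S a := by
  have hset : (psi n S).filter (fun p => p.1 = a) =
      (Finset.Ico (0:ℤ) (fcount S a)).image (fun b => ((a, b) : ℤ × ℤ)) := by
    ext p
    simp only [Finset.mem_filter, Finset.mem_image, Finset.mem_Ico, mem_psi, mem_W2]
    constructor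
    · rintro ⟨⟨hW, hf⟩, h1⟩
      rw [h1] at hf
      exact ⟨p.2, ⟨by omega, hf⟩, by rw [← h1]⟩
    · rintro ⟨b, ⟨hb0, hbf⟩, rfl⟩
      have hfle := fcount_le hS ha ha2
      refine ⟨⟨⟨ha, hb0, by omega⟩, by simpa using hbf⟩, rfl⟩
  rw [hset, Finset.card_image_of_injective _ (by intro x y h; simpa using h),
    Int.card_Ico]
  omega

lemma psi_injOn {n : ℕ} {S S' : Finset ℤ} (hS : S ⊆ Finset.Icc 1 ((n:ℤ)-1))
    (hS' : S' ⊆ Finset.Icc 1 ((n:ℤ)-1)) (h : psi n S = psi n S') : S = S' := by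
  have hf : ∀ a : ℤ, 0 ≤ a → a ≤ (n:ℤ) - 2 → fcount S a = fcount S' a := by
    intro a ha ha2
    rw [← psi_row_card hS ha ha2, ← psi_row_card hS' ha ha2, h]
  have htop : ∀ (T : Finset ℤ), T ⊆ Finset.Icc 1 ((n:ℤ)-1) →
      fcount T ((n:ℤ)-1) = 0 := by
    intro T hT
    unfold fcount
    rw [Finset.card_eq_zero, Finset.filter_eq_empty_iff]
    intro s hs
    have := Finset.mem_Icc.mp (hT hs)
    omega
  have hfall : ∀ a : ℤ, 0 ≤ a → a ≤ (n:ℤ) - 1 → fcount S a = fcount S' a := by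
    intro a ha ha2
    rcases eq_or_lt_of_le ha2 with h' | h'
    · rw [h', htop S hS, htop S' hS']
    · exact hf a ha (by omega)
  ext s
  by_cases hs : s ∈ Finset.Icc (1:ℤ) ((n:ℤ)-1)
  · have hsI := Finset.mem_Icc.mp hs
    have e1 : fcount S (s-1) = fcount S' (s-1) := hfall (s-1) (by omega) (by omega)
    have e2 : fcount S s = fcount S' s := hfall s (by omega) (by omega)
    have p1 := fcount_pred S s
    have p2 := fcount_pred S' s
    constructor <;> intro hmem
    · by_contra hmem'
      rw [if_pos hmem] at p1
      rw [if_neg hmem'] at p2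
      omega
    · by_contra hmem'
      rw [if_neg hmem'] at p1
      rw [if_pos hmem] at p2
      omega
  · constructor <;> intro hmem
    · exact absurd (hS hmem) hs
    · exact absurd (hS' hmem) hs

lemma ideal_eq_psi {n : ℕ} {I : Finset (ℤ × ℤ)} (hIW : I ⊆ W2 n)
    (hdc : ∀ u v : ℤ × ℤ, le2 Pvec (W2 n) u v → v ∈ I → u ∈ I) :
    ∃ S ⊆ Finset.Icc (1:ℤ) ((n:ℤ)-1), psi n S = I := by
  set r : ℤ → ℕ := fun b => ((I.filter (fun p => p.2 = b)).image Prod.fst).card with hr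
  -- membership characterization of rows
  have hmemT : ∀ a b : ℤ, a ∈ ((I.filter (fun p => p.2 = b)).image Prod.fst) ↔ (a, b) ∈ I := by
    intro a b
    simp only [Finset.mem_image, Finset.mem_filter]
    constructor
    · rintro ⟨p, ⟨hp, hp2⟩, hp1⟩
      have : p = (a, b) := by ext <;> simp [hp1, hp2]
      rwa [this] at hp
    · intro hab
      exact ⟨(a, b), ⟨hab, rfl⟩, rfl⟩
  have hmem : ∀ a b : ℤ, (a, b) ∈ I ↔ 0 ≤ a ∧ a < (r b : ℤ) := by
    intro a b
    rw [← hmemT]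
    refine initseg ?_ ?_ a
    · intro x hx
      rw [hmemT] at hx
      exact (mem_W2.mp (hIW hx)).1
    · intro x hx x' hx0 hxle
      rw [hmemT] at hx ⊢
      refine hdc (x', b) (x, b) ?_ hx
      have hW := mem_W2.mp (hIW hx)
      rw [le2_char]
      refine ⟨mem_W2.mpr ⟨hx0, hW.2.1, by simp only; omega⟩, hIW hx, le_refl _, by simp only; omega⟩
  -- strict decrease
  have hdec : ∀ b : ℤ, 0 ≤ b → 1 ≤ r (b+1) → r (b+1) + 1 ≤ r b := by
    intro b hb h1
    have htop : ((r (b+1) : ℤ) - 1, b+1) ∈ I := by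
      rw [hmem]; omega
    have hWtop := mem_W2.mp (hIW htop)
    have hnew : (((r (b+1) : ℤ)), b) ∈ I := by
      refine hdc _ _ ?_ htop
      rw [le2_char]
      refine ⟨mem_W2.mpr ⟨by positivity, hb, by simp only at hWtop ⊢; omega⟩,
        hIW htop, by simp only; omega, by simp only; omega⟩
    rw [hmem] at hnew
    omega
  have hchain : ∀ (k : ℕ) (b : ℤ), 0 ≤ b → 1 ≤ r (b + k) → r (b + k) + k ≤ r b := by
    intro k
    induction k with
    | zero => intro b hb h1; simp
    | succ k ih =>
      intro b hb h1
      have heq : b + ((k:ℕ)+1:ℕ) = (b+1) + k := by push_cast; ring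
      rw [heq] at h1 ⊢
      have h2 := ih (b+1) (by omega) h1
      have h3 := hdec b hb (by omega)
      omega
  -- the set S of positive row counts
  set S : Finset ℤ :=
    ((Finset.Icc (0:ℤ) ((n:ℤ)-2)).image (fun b => (r b : ℤ))).filter (fun s => 0 < s) with hSdef
  have hmemS : ∀ s : ℤ, s ∈ S ↔ 0 < s ∧ ∃ b, 0 ≤ b ∧ b ≤ (n:ℤ)-2 ∧ (r b : ℤ) = s := by
    intro s
    simp only [hSdef, Finset.mem_filter, Finset.mem_image, Finset.mem_Icc]
    constructor
    · rintro ⟨⟨b, ⟨hb1, hb2⟩, hbs⟩, hpos⟩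
      exact ⟨hpos, b, hb1, hb2, hbs⟩
    · rintro ⟨hpos, b, hb1, hb2, hbs⟩
      exact ⟨⟨b, ⟨hb1, hb2⟩, hbs⟩, hpos⟩
  have hSsub : S ⊆ Finset.Icc (1:ℤ) ((n:ℤ)-1) := by
    intro s hs
    rw [hmemS] at hs
    obtain ⟨hpos, b, hb1, hb2, hbs⟩ := hs
    have hrb : 1 ≤ r b := by omega
    have hel : ((r b : ℤ) - 1, b) ∈ I := by rw [hmem]; omega
    have hW := mem_W2.mp (hIW hel)
    rw [Finset.mem_Icc]
    simp only at hW
    omega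
  refine ⟨S, hSsub, ?_⟩
  -- key counting: fcount S a = card of B_a
  have hB : ∀ a : ℤ, 0 ≤ a → ∀ b : ℤ,
      (b < (fcount S a : ℤ) ∧ 0 ≤ b) ↔ (0 ≤ b ∧ b ≤ (n:ℤ)-2 ∧ a < (r b : ℤ)) := by
    intro a ha
    set B : Finset ℤ := (Finset.Icc (0:ℤ) ((n:ℤ)-2)).filter (fun b => a < (r b : ℤ)) with hBdef
    have hmemB : ∀ b : ℤ, b ∈ B ↔ 0 ≤ b ∧ b ≤ (n:ℤ)-2 ∧ a < (r b : ℤ) := by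
      intro b
      simp only [hBdef, Finset.mem_filter, Finset.mem_Icc]
      tauto
    -- fcount S a = B.card
    have himg : S.filter (fun s => a < s) = B.image (fun b => (r b : ℤ)) := by
      ext s
      simp only [Finset.mem_filter, Finset.mem_image]
      constructor
      · rintro ⟨hs, has⟩
        rw [hmemS] at hs
        obtain ⟨hpos, b, hb1, hb2, hbs⟩ := hs
        exact ⟨b, (hmemB b).mpr ⟨hb1, hb2, by omega⟩, hbs⟩
      · rintro ⟨b, hb, hbs⟩
        rw [hmemB] at hb
        refine ⟨(hmemS s).mpr ⟨by omega, b, hb.1, hb.2.1, hbs⟩, by omega⟩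
    have hinj : Set.InjOn (fun b => (r b : ℤ)) B := by
      intro b hb b' hb' heq
      rw [Finset.mem_coe, hmemB] at hb hb'
      simp only at heq
      by_contra hne
      rcases lt_or_gt_of_ne hne with hlt | hlt
      · have := hchain (b' - b).toNat b hb.1 (by
          rw [show b + ((b' - b).toNat : ℤ) = b' by omega]; omega)
        rw [show b + ((b' - b).toNat : ℤ) = b' by omega] at this
        omega
      · have := hchain (b - b').toNat b' hb'.1 (by
          rw [show b' + ((b - b').toNat : ℤ) = b by omega]; omega)
        rw [show b' + ((b - b').toNat : ℤ) = b by omega] at this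
        omega
    have hcard : fcount S a = B.card := by
      unfold fcount
      rw [himg, Finset.card_image_of_injOn hinj]
    -- B is an initial segment
    have hBinit : ∀ b : ℤ, b ∈ B ↔ 0 ≤ b ∧ b < B.card := by
      refine initseg ?_ ?_
      · intro b hb; exact ((hmemB b).mp hb).1
      · intro b hb b' hb0 hble
        rw [hmemB] at hb ⊢
        refine ⟨hb0, by omega, ?_⟩
        have := hchain (b - b').toNat b' hb0 (by
          rw [show b' + ((b - b').toNat : ℤ) = b by omega]; omega)
        rw [show b' + ((b - b').toNat : ℤ) = b by omega] at this
        omega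
    intro b
    rw [hcard]
    constructor
    · rintro ⟨h1, h2⟩
      exact (hmemB b).mp ((hBinit b).mpr ⟨h2, h1⟩)
    · intro h
      have hb := (hBinit b).mp ((hmemB b).mpr h)
      exact ⟨hb.2, hb.1⟩
  -- final set equality
  ext p
  obtain ⟨a, b⟩ := p
  rw [mem_psi, hmem, mem_W2]
  simp only
  constructor
  · rintro ⟨⟨ha, hb, hab⟩, hbf⟩
    have := (hB a ha b).mp ⟨hbf, hb⟩
    exact ⟨ha, this.2.2⟩
  · rintro ⟨ha, har⟩
    have hel : (a, b) ∈ I := (hmem a b).mpr ⟨ha, har⟩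
    have hW := mem_W2.mp (hIW hel)
    simp only at hW
    have := (hB a ha b).mpr ⟨hW.2.1, by omega, har⟩
    exact ⟨⟨ha, hW.2.1, hW.2.2⟩, this.1⟩

end Aux

/-- The number of order ideals of `P_n` is `2^(n-1)`. -/
theorem stmt0 (n : ℕ) (hn : 1 ≤ n) :
    (ideals2 Pvec (W2 n)).card = 2 ^ (n - 1) := by
  have hset : ideals2 Pvec (W2 n) =
      (Finset.Icc (1:ℤ) ((n:ℤ)-1)).powerset.image (psi n) := by
    ext I
    simp only [ideals2, Finset.mem_filter, Finset.mem_powerset, Finset.mem_image]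
    constructor
    · rintro ⟨hIW, hI⟩
      obtain ⟨S, hS, hpsi⟩ := ideal_eq_psi hI.1 hI.2
      exact ⟨S, hS, hpsi⟩
    · rintro ⟨S, hS, rfl⟩
      exact ⟨Finset.filter_subset _ _, psi_isIdeal⟩
  rw [hset, Finset.card_image_of_injOn (fun S hS S' hS' h =>
    psi_injOn (Finset.mem_powerset.mp hS) (Finset.mem_powerset.mp hS') h),
    Finset.card_powerset, Int.card_Icc]
  congr 1
  omega
end

section
/- For every integer n ≥ 1, the rank generating function of the order ideals of the one-color tetrahedral poset T_n({g}) satisfies F(J(T_n({g})),q) = ∏_{j=1}^{n} [j]_q!, as polynomials in ℤ[q], where [j]_q! = ∏_{i=1}^{j} (1+q+⋯+q^{i−1}) is the q-factorial. -/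
open scoped Classical

noncomputable section

/-- `V3 n` is the set `{(a,b,c) ∈ ℤ≥0³ : a + b + c ≤ n - 2}`. -/
def V3 (n : ℕ) : Finset (ℤ × ℤ × ℤ) :=
  ((Finset.Icc (0:ℤ) (n:ℤ) ×ˢ Finset.Icc (0:ℤ) (n:ℤ) ×ˢ Finset.Icc (0:ℤ) (n:ℤ)).filter
    (fun p => p.1 + p.2.1 + p.2.2 ≤ (n:ℤ) - 2))

/-- The six edge vectors. -/
def vr : ℤ × ℤ × ℤ := (1,0,0)
def vg : ℤ × ℤ × ℤ := (0,1,0)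
def vy : ℤ × ℤ × ℤ := (0,0,1)
def vb : ℤ × ℤ × ℤ := (-1,1,0)
def vo : ℤ × ℤ × ℤ := (-1,0,1)
def vs : ℤ × ℤ × ℤ := (0,1,-1)

/-- One step: add a vector of `S`, staying inside `W`. -/
def step3 (S : Set (ℤ × ℤ × ℤ)) (W : Finset (ℤ × ℤ × ℤ)) (u v : ℤ × ℤ × ℤ) : Prop :=
  u ∈ W ∧ v ∈ W ∧ ∃ e ∈ S, v = u + e

/-- The order relation of `T_n(S)`: reflexive-transitive closure of `step3`,
restricted to `W`. -/
def le3 (S : Set (ℤ × ℤ × ℤ)) (W : Finset (ℤ × ℤ × ℤ)) (u v : ℤ × ℤ × ℤ) : Prop :=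
  u ∈ W ∧ v ∈ W ∧ Relation.ReflTransGen (step3 S W) u v

/-- An order ideal: a downward closed subset of `W`. -/
def IsIdeal3 (S : Set (ℤ × ℤ × ℤ)) (W : Finset (ℤ × ℤ × ℤ))
    (I : Finset (ℤ × ℤ × ℤ)) : Prop :=
  I ⊆ W ∧ ∀ u v : ℤ × ℤ × ℤ, le3 S W u v → v ∈ I → u ∈ I

/-- The set of all order ideals of `T_n(S)`. -/
def ideals3 (S : Set (ℤ × ℤ × ℤ)) (W : Finset (ℤ × ℤ × ℤ)) :
    Finset (Finset (ℤ × ℤ × ℤ)) :=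
  W.powerset.filter (fun I => IsIdeal3 S W I)

/-- The rank generating function `F(J(T_n(S)),q) = Σ_{I} q^{|I|}`. -/
def genF3 (S : Set (ℤ × ℤ × ℤ)) (W : Finset (ℤ × ℤ × ℤ)) : Polynomial ℤ :=
  ∑ I ∈ ideals3 S W, Polynomial.X ^ I.card

/-- `[i]_q = 1 + q + ⋯ + q^{i-1}`. -/
def qInt (i : ℕ) : Polynomial ℤ := ∑ t ∈ Finset.range i, Polynomial.X ^ t

/-- The q-factorial `[j]_q! = ∏_{i=1}^{j} [i]_q`. -/
def qFact (j : ℕ) : Polynomial ℤ := ∏ i ∈ Finset.Icc 1 j, qInt i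

end

noncomputable section Aux

lemma mem_V3 {n : ℕ} {p : ℤ × ℤ × ℤ} :
    p ∈ V3 n ↔ 0 ≤ p.1 ∧ 0 ≤ p.2.1 ∧ 0 ≤ p.2.2 ∧ p.1 + p.2.1 + p.2.2 ≤ (n:ℤ) - 2 := by
  simp only [V3, Finset.mem_filter, Finset.mem_product, Finset.mem_Icc]
  omega

/-- index set of chains -/
def D3 (n : ℕ) : Finset (ℤ × ℤ) :=
  (Finset.Icc (0:ℤ) (n:ℤ) ×ˢ Finset.Icc (0:ℤ) (n:ℤ)).filter (fun p => p.1 + p.2 ≤ (n:ℤ) - 2)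

lemma mem_D3 {n : ℕ} {p : ℤ × ℤ} :
    p ∈ D3 n ↔ 0 ≤ p.1 ∧ 0 ≤ p.2 ∧ p.1 + p.2 ≤ (n:ℤ) - 2 := by
  simp only [D3, Finset.mem_filter, Finset.mem_product, Finset.mem_Icc]
  omega

/-- number of elements of the chain indexed by `p` -/
def m3 (n : ℕ) (p : ℤ × ℤ) : ℕ := ((n:ℤ) - 1 - p.1 - p.2).toNat

lemma step3_vg {n : ℕ} {u v : ℤ × ℤ × ℤ} (h : step3 {vg} (V3 n) u v) :
    u ∈ V3 n ∧ v ∈ V3 n ∧ v.1 = u.1 ∧ v.2.2 = u.2.2 ∧ v.2.1 = u.2.1 + 1 := by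
  obtain ⟨hu, hv, e, he, rfl⟩ := h
  rw [Set.mem_singleton_iff] at he
  subst he
  refine ⟨hu, hv, ?_, ?_, ?_⟩ <;> simp [vg, Prod.fst_add, Prod.snd_add]

lemma le3_iff {n : ℕ} {u v : ℤ × ℤ × ℤ} :
    le3 {vg} (V3 n) u v ↔
      u ∈ V3 n ∧ v ∈ V3 n ∧ v.1 = u.1 ∧ v.2.2 = u.2.2 ∧ u.2.1 ≤ v.2.1 := by
  constructor
  · rintro ⟨hu, hv, h⟩
    refine ⟨hu, hv, ?_⟩
    clear hu hv
    induction h with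
    | refl => exact ⟨rfl, rfl, le_refl _⟩
    | tail h1 h2 ih =>
      obtain ⟨_, _, e1, e2, e3⟩ := step3_vg h2
      exact ⟨e1.trans ih.1, e2.trans ih.2.1, by omega⟩
  · rintro ⟨hu, hv, h1, h2, h3⟩
    refine ⟨hu, hv, ?_⟩
    obtain ⟨a, b, c⟩ := u
    obtain ⟨a', b', c'⟩ := v
    simp only at h1 h2 h3
    subst h1; subst h2
    have key : ∀ k : ℕ, ∀ b0 : ℤ, (a', b0, c') ∈ V3 n → ((a', b0 + (k:ℤ), c') ∈ V3 n) →
        Relation.ReflTransGen (step3 {vg} (V3 n)) (a', b0, c') (a', b0 + (k:ℤ), c') := by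
      intro k
      induction k with
      | zero => intro b0 h _; simpa using Relation.ReflTransGen.refl
      | succ k ih =>
        intro b0 hb0 hbk
        have h1mem : (a', b0 + 1, c') ∈ V3 n := by
          rw [mem_V3] at hb0 hbk ⊢
          simp only [] at hb0 hbk ⊢
          push_cast at hbk
          omega
        have hstep : step3 {vg} (V3 n) (a', b0, c') (a', b0 + 1, c') := by
          refine ⟨hb0, h1mem, vg, rfl, ?_⟩
          simp [vg, Prod.ext_iff]
        have hrest := ih (b0 + 1) h1mem (by
          have heq : b0 + 1 + (k:ℤ) = b0 + (((k:ℕ)+1 : ℕ) : ℤ) := by push_cast; ring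
          rw [heq]; exact hbk)
        refine Relation.ReflTransGen.head hstep ?_
        have heq : b0 + 1 + (k:ℤ) = b0 + (((k:ℕ)+1 : ℕ) : ℤ) := by push_cast; ring
        rwa [heq] at hrest
    have hk : b' = b + ((b' - b).toNat : ℤ) := by omega
    have hfin := key (b' - b).toNat b hu (by rw [← hk]; exact hv)
    rwa [← hk] at hfin

lemma mem_ideals3_iff {n : ℕ} {I : Finset (ℤ × ℤ × ℤ)} :
    I ∈ ideals3 {vg} (V3 n) ↔
      I ⊆ V3 n ∧ ∀ p ∈ I, ∀ b' : ℤ, 0 ≤ b' → b' ≤ p.2.1 → (p.1, b', p.2.2) ∈ I := by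
  rw [ideals3, Finset.mem_filter, Finset.mem_powerset]; unfold IsIdeal3
  constructor
  · rintro ⟨hsub, _, hdc⟩
    refine ⟨hsub, fun p hp b' hb'0 hb' => ?_⟩
    refine hdc (p.1, b', p.2.2) p ?_ hp
    rw [le3_iff]
    have hpV := hsub hp
    rw [mem_V3] at hpV
    refine ⟨mem_V3.mpr ⟨by simp only []; omega, by simp only []; omega,
      by simp only []; omega, by simp only []; omega⟩,
      mem_V3.mpr hpV, rfl, rfl, by simp only []; omega⟩
  · rintro ⟨hsub, hdc⟩
    refine ⟨hsub, hsub, fun u v huv hv => ?_⟩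
    rw [le3_iff] at huv
    obtain ⟨huW, hvW, h1, h2, h3⟩ := huv
    have h0 : 0 ≤ u.2.1 := (mem_V3.mp huW).2.1
    have hmem := hdc v hv u.2.1 h0 h3
    rw [h1, h2] at hmem
    simpa using hmem

lemma downclosed_eq_Ico (T : Finset ℤ) (h0 : ∀ b ∈ T, 0 ≤ b)
    (hT : ∀ b ∈ T, ∀ b', 0 ≤ b' → b' ≤ b → b' ∈ T) :
    T = Finset.Ico (0:ℤ) (T.card : ℤ) := by
  refine (Finset.eq_of_subset_of_card_le ?_ ?_).symm
  · intro x hx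
    rw [Finset.mem_Ico] at hx
    by_contra hxT
    have hsub : T ⊆ Finset.Ico 0 x := by
      intro b hb
      rw [Finset.mem_Ico]
      refine ⟨h0 b hb, ?_⟩
      by_contra hbx
      push_neg at hbx
      exact hxT (hT b hb x hx.1 hbx)
    have hc := Finset.card_le_card hsub
    rw [Int.card_Ico] at hc
    omega
  · rw [Int.card_Ico]
    omega

/-- The fiber of an ideal over a chain index. -/
def fib3 (I : Finset (ℤ × ℤ × ℤ)) (p : ℤ × ℤ) : Finset (ℤ × ℤ × ℤ) :=
  I.filter (fun r => r.1 = p.1 ∧ r.2.2 = p.2)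

lemma fib3_image_card (I : Finset (ℤ × ℤ × ℤ)) (p : ℤ × ℤ) :
    ((fib3 I p).image (fun r => r.2.1)).card = (fib3 I p).card := by
  apply Finset.card_image_of_injOn
  intro r hr r' hr' hb
  simp only [Finset.mem_coe, fib3, Finset.mem_filter] at hr hr'
  obtain ⟨a, b, c⟩ := r
  obtain ⟨a'', b'', c''⟩ := r'
  obtain ⟨-, h1, h2⟩ := hr
  obtain ⟨-, h1', h2'⟩ := hr'
  have hb' : b = b'' := hb
  simp only [] at h1 h2 h1' h2'
  simp only [Prod.mk.injEq]
  omega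

lemma fiber_mem_iff {n : ℕ} {I : Finset (ℤ × ℤ × ℤ)} (hI : I ∈ ideals3 {vg} (V3 n))
    (p : ℤ × ℤ) (q : ℤ × ℤ × ℤ) (hq1 : q.1 = p.1) (hq2 : q.2.2 = p.2) :
    q ∈ I ↔ 0 ≤ q.2.1 ∧ q.2.1 < ((fib3 I p).card : ℤ) := by
  rw [mem_ideals3_iff] at hI
  obtain ⟨hsub, hdc⟩ := hI
  set B := (fib3 I p).image (fun r => r.2.1) with hB
  have hBcard : B.card = (fib3 I p).card := fib3_image_card I p
  have hB0 : ∀ b ∈ B, 0 ≤ b := by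
    intro b hb
    simp only [hB, Finset.mem_image, fib3, Finset.mem_filter] at hb
    obtain ⟨r, ⟨hrI, _⟩, hrb⟩ := hb
    have := (mem_V3.mp (hsub hrI)).2.1
    omega
  have hBdc : ∀ b ∈ B, ∀ b', 0 ≤ b' → b' ≤ b → b' ∈ B := by
    intro b hb b' hb'0 hb'
    simp only [hB, Finset.mem_image, fib3, Finset.mem_filter] at hb ⊢
    obtain ⟨r, ⟨hrI, hr1, hr2⟩, hrb⟩ := hb
    have hmem := hdc r hrI b' hb'0 (by omega)
    exact ⟨(r.1, b', r.2.2), ⟨hmem, by simpa using hr1, by simpa using hr2⟩, rfl⟩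
  have hIco := downclosed_eq_Ico B hB0 hBdc
  rw [← hBcard]
  constructor
  · intro hqI
    have hqB : q.2.1 ∈ B := by
      simp only [hB, Finset.mem_image, fib3, Finset.mem_filter]
      exact ⟨q, ⟨hqI, hq1, hq2⟩, rfl⟩
    rw [hIco, Finset.mem_Ico] at hqB
    omega
  · rintro ⟨hge, hlt⟩
    have hqB : q.2.1 ∈ B := by
      rw [hIco, Finset.mem_Ico]
      omega
    simp only [hB, Finset.mem_image, fib3, Finset.mem_filter] at hqB
    obtain ⟨r, ⟨hrI, hr1, hr2⟩, hrb⟩ := hqB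
    have hrq : r = q := by
      ext
      · omega
      · omega
      · omega
    rwa [← hrq]

lemma fib3_card_le {n : ℕ} {I : Finset (ℤ × ℤ × ℤ)} (hsub : I ⊆ V3 n) (p : ℤ × ℤ) :
    (fib3 I p).card ≤ m3 n p := by
  have h1 : (fib3 I p).card = ((fib3 I p).image (fun r => r.2.1)).card :=
    (fib3_image_card I p).symm
  rw [h1]
  have hsub2 : (fib3 I p).image (fun r => r.2.1) ⊆ Finset.Icc 0 ((n:ℤ) - 2 - p.1 - p.2) := by
    intro b hb
    simp only [Finset.mem_image, fib3, Finset.mem_filter] at hb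
    obtain ⟨r, ⟨hrI, hr1, hr2⟩, hrb⟩ := hb
    have := mem_V3.mp (hsub hrI)
    rw [Finset.mem_Icc]
    omega
  have hcc := Finset.card_le_card hsub2
  rw [Int.card_Icc] at hcc
  simp only [m3]
  omega

lemma genF3_eq (n : ℕ) :
    genF3 {vg} (V3 n) = ∏ p ∈ D3 n, qInt (m3 n p + 1) := by
  unfold genF3 qInt
  rw [Finset.prod_sum]
  refine Finset.sum_nbij'
    (i := fun I => fun p (_ : p ∈ D3 n) => (fib3 I p).card)
    (j := fun f => (V3 n).filter
      (fun q => ∃ h : (q.1, q.2.2) ∈ D3 n, q.2.1 < ((f (q.1, q.2.2) h : ℕ) : ℤ)))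
    ?_ ?_ ?_ ?_ ?_
  · -- hi
    intro I hI
    rw [Finset.mem_pi]
    intro p hp
    have hsub := (mem_ideals3_iff.mp hI).1
    exact Finset.mem_range.mpr (Nat.lt_succ_of_le (fib3_card_le hsub p))
  · -- hj
    intro f hf
    rw [Finset.mem_pi] at hf
    rw [mem_ideals3_iff]
    refine ⟨Finset.filter_subset _ _, ?_⟩
    rintro ⟨a, b, c⟩ hq b' hb'0 hb'
    simp only [Finset.mem_filter] at hq ⊢
    obtain ⟨hqV, h, hlt⟩ := hq
    rw [mem_V3] at hqV
    simp only [] at hqV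
    have hb'2 : b' ≤ b := hb'
    have hlt2 : b < ((f (a, c) h : ℕ) : ℤ) := hlt
    refine ⟨mem_V3.mpr ⟨by simp only []; omega, by simp only []; omega,
      by simp only []; omega, by simp only []; omega⟩, h, ?_⟩
    show b' < ((f (a, c) h : ℕ) : ℤ)
    omega
  · -- left inverse
    intro I hI
    ext q
    simp only [Finset.mem_filter]
    constructor
    · rintro ⟨hqV, h, hlt⟩
      have h0 := (mem_V3.mp hqV).2.1
      exact (fiber_mem_iff hI (q.1, q.2.2) q rfl rfl).mpr ⟨h0, hlt⟩
    · intro hqI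
      have hsub := (mem_ideals3_iff.mp hI).1
      have hqV := hsub hqI
      have hqV' := mem_V3.mp hqV
      have hD : (q.1, q.2.2) ∈ D3 n := mem_D3.mpr ⟨hqV'.1, hqV'.2.2.1, by omega⟩
      have hlt := (fiber_mem_iff hI (q.1, q.2.2) q rfl rfl).mp hqI
      exact ⟨hqV, hD, hlt.2⟩
  · -- right inverse
    intro f hf
    rw [Finset.mem_pi] at hf
    funext p hp
    show (fib3 ((V3 n).filter
      (fun q => ∃ h : (q.1, q.2.2) ∈ D3 n, q.2.1 < ((f (q.1, q.2.2) h : ℕ) : ℤ))) p).card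
        = f p hp
    obtain ⟨x, y⟩ := p
    have hfle : f (x, y) hp ≤ m3 n (x, y) := by
      have hr := hf (x, y) hp
      rw [Finset.mem_range] at hr
      omega
    have hD := mem_D3.mp hp
    have hkey : fib3 ((V3 n).filter
        (fun q => ∃ h : (q.1, q.2.2) ∈ D3 n, q.2.1 < ((f (q.1, q.2.2) h : ℕ) : ℤ))) (x, y)
        = (Finset.Ico (0:ℤ) ((f (x, y) hp : ℕ) : ℤ)).image (fun b => (x, b, y)) := by
      ext r
      simp only [fib3, Finset.mem_filter, Finset.mem_image, Finset.mem_Ico]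
      constructor
      · rintro ⟨⟨hrV, h, hlt⟩, hr1, hr2⟩
        obtain ⟨a, b, c⟩ := r
        have ha : a = x := hr1
        have hc : c = y := hr2
        subst ha; subst hc
        have h0 : (0:ℤ) ≤ b := (mem_V3.mp hrV).2.1
        have hlt2 : b < ((f (a, c) hp : ℕ) : ℤ) := hlt
        exact ⟨b, ⟨h0, hlt2⟩, rfl⟩
      · rintro ⟨b, ⟨hb0, hblt⟩, rfl⟩
        have hV : (x, b, y) ∈ V3 n := by
          rw [mem_V3]
          have hx : (0:ℤ) ≤ x := hD.1
          have hy : (0:ℤ) ≤ y := hD.2.1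
          have hxy : x + y ≤ (n:ℤ) - 2 := hD.2.2
          simp only [m3] at hfle
          refine ⟨?_, ?_, ?_, ?_⟩ <;> simp only [] <;> omega
        exact ⟨⟨hV, hp, hblt⟩, rfl, rfl⟩
    have hinj : Set.InjOn (fun b => ((x, b, y) : ℤ × ℤ × ℤ))
        ↑(Finset.Ico (0:ℤ) ((f (x, y) hp : ℕ) : ℤ)) := by
      intro a _ b _ h
      exact congrArg (fun r : ℤ × ℤ × ℤ => r.2.1) h
    rw [hkey, Finset.card_image_of_injOn hinj, Int.card_Ico]
    omega
  · -- summand equality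
    intro I hI
    have hsub := (mem_ideals3_iff.mp hI).1
    have hfib : ∀ p : ℤ × ℤ, fib3 I p = I.filter (fun q => (q.1, q.2.2) = p) := by
      intro p
      apply Finset.filter_congr
      intro q _
      rw [Prod.ext_iff]
    have hcard : I.card = ∑ p ∈ D3 n, (fib3 I p).card := by
      simp only [hfib]
      exact Finset.card_eq_sum_card_fiberwise
        (f := fun q : ℤ × ℤ × ℤ => (q.1, q.2.2)) (t := D3 n)
        (fun q hq => by
          have hqV' := mem_V3.mp (hsub hq)
          show (q.1, q.2.2) ∈ D3 n
          rw [mem_D3]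
          simp only []
          omega)
    rw [Finset.prod_pow_eq_pow_sum]
    congr 1
    exact hcard.trans (Finset.sum_attach (D3 n) (fun p => (fib3 I p).card)).symm

lemma D3_fiber_card (n : ℕ) (i : ℕ) (h2 : 2 ≤ i) (hin : i ≤ n) :
    ((D3 n).filter (fun p => m3 n p + 1 = i)).card = n + 1 - i := by
  have hrange : (Finset.range (n + 1 - i)).card = n + 1 - i := Finset.card_range _
  rw [← hrange]
  refine Finset.card_nbij' (fun p => p.1.toNat) (fun t => ((t:ℤ), (n:ℤ) - i - t))
    ?_ ?_ ?_ ?_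
  · intro p hp
    rw [Finset.mem_coe, Finset.mem_filter] at hp; simp only [mem_D3, m3] at hp
    rw [Finset.mem_coe, Finset.mem_range]
    simp only []
    omega
  · intro t ht
    rw [Finset.mem_coe, Finset.mem_range] at ht
    rw [Finset.mem_coe, Finset.mem_filter]; simp only [mem_D3, m3]
    refine ⟨⟨?_, ?_, ?_⟩, ?_⟩ <;> (try simp only []) <;> omega
  · intro p hp
    obtain ⟨a, c⟩ := p
    rw [Finset.mem_coe, Finset.mem_filter] at hp; simp only [mem_D3, m3] at hp
    simp only [Prod.mk.injEq]
    constructor <;> (try simp only []) <;> omega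
  · intro t ht
    rw [Finset.mem_coe, Finset.mem_range] at ht
    show ((t:ℤ)).toNat = t
    omega

lemma prod_qInt_eq (n : ℕ) (hn : 1 ≤ n) :
    ∏ p ∈ D3 n, qInt (m3 n p + 1) = ∏ j ∈ Finset.Icc 1 n, qFact j := by
  have hmaps : ∀ p ∈ D3 n, m3 n p + 1 ∈ Finset.Icc 1 n := by
    intro p hp
    have hD := mem_D3.mp hp
    simp only [m3, Finset.mem_Icc]
    omega
  have h1 : ∏ p ∈ D3 n, qInt (m3 n p + 1)
      = ∏ i ∈ Finset.Icc 1 n, ∏ p ∈ (D3 n).filter (fun p => m3 n p + 1 = i), qInt i :=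
    (Finset.prod_fiberwise_of_maps_to' hmaps qInt).symm
  have h2 : ∀ i ∈ Finset.Icc 1 n,
      (∏ _p ∈ (D3 n).filter (fun p => m3 n p + 1 = i), qInt i)
        = ∏ _j ∈ Finset.Icc i n, qInt i := by
    intro i hi
    rw [Finset.prod_const, Finset.prod_const]
    rw [Finset.mem_Icc] at hi
    rcases eq_or_lt_of_le hi.1 with hh | hh
    · have hq : qInt 1 = 1 := by simp [qInt]
      rw [← hh, hq, one_pow, one_pow]
    · rw [D3_fiber_card n i hh hi.2, Nat.card_Icc]
  rw [h1, Finset.prod_congr rfl h2]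
  rw [Finset.prod_comm' (show ∀ (i j : ℕ),
      i ∈ Finset.Icc 1 n ∧ j ∈ Finset.Icc i n ↔ i ∈ Finset.Icc 1 j ∧ j ∈ Finset.Icc 1 n by
    intro i j; simp only [Finset.mem_Icc]; omega)]
  rfl

end Aux

/-- The rank generating function of `J(T_n({g}))` is `∏_{j=1}^{n} [j]_q!`. -/
theorem stmt4 (n : ℕ) (hn : 1 ≤ n) :
    genF3 {vg} (V3 n) = ∏ j ∈ Finset.Icc 1 n, qFact j := by
  rw [genF3_eq n, prod_qInt_eq n hn]
end
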